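/- For all bounded intervals I, J ⊂ ℝ with |I| = |J| > 0 and I ∩ J = ∅, one has ∫_ℝ Φ_I(x)·h_{J_+}(x) dx + ∫_ℝ Φ_J(x)·h_{I_+}(x) dx < 0. -/

import Mathlib

open MeasureTheory Set Filter Topology

/-- `Φ(x) = (1/π) ln(4|x(x-1)|/(2x-1)²)`, the Hilbert transform of the Haar
function `h_{[0,1)} = 1_{[1/2,1)} - 1_{[0,1/2)}`. -/
noncomputable def Phi (x : ℝ) : ℝ :=
  (1 / Real.pi) * Real.log (4 * |x * (x - 1)| / (2 * x - 1) ^ 2)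

/-- `Φ_I` for the interval `I = [a, a + ℓ)`: `Φ_I(x) = Φ((x - a)/ℓ)`. -/
noncomputable def PhiI (a ℓ : ℝ) (x : ℝ) : ℝ :=
  Phi ((x - a) / ℓ)

/-- The Haar function of the interval `[a, b)`: `1` on the right half,
`-1` on the left half, `0` outside. -/
noncomputable def haarOn (a b : ℝ) (x : ℝ) : ℝ :=
  if x ∈ Set.Ico ((a + b) / 2) b then 1 else if x ∈ Set.Ico a ((a + b) / 2) then -1 else 0

/-!
With Mathlib's `Real.log x = log |x|`, the function
`F(x) = (1/π) (x log x + (x - 1) log (x - 1) - 2 (x - 1/2) log (x - 1/2))` is continuous and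
`F' = Φ` off `{0, 1/2, 1}`, so `∫_p^q Φ = F q - F p` for all `p, q`; moreover
`F (1 - x) = -F x`. If `J = I + sℓ`, pairing `Φ_I` with `h_{J₊}` gives
`ℓ (F(s+1) - 2F(s+3/4) + F(s+1/2))`, and by the symmetry of `F` the two pairings add up to
`ℓ (F(s+1) - F(s) - 2 (F(s+3/4) - F(s+1/4)))`. Disjointness means `|s| ≥ 1`, and swapping
`I` and `J` we may take `s ≥ 1`; then this is
`-ℓ ∫_s^{s+1/4} (Φ(t+1/4) + Φ(t+1/2) - Φ(t) - Φ(t+3/4)) dt < 0`, the integrand being positive by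
strict concavity of `Φ` on `(1, ∞)`.
-/

noncomputable def PhiAntideriv (x : ℝ) : ℝ :=
  (1 / Real.pi) * (x * Real.log x + (x - 1) * Real.log (x - 1)
    - 2 * ((x - 1 / 2) * Real.log (x - 1 / 2)))

theorem continuous_PhiAntideriv : Continuous PhiAntideriv := by
  unfold PhiAntideriv
  fun_prop

theorem PhiAntideriv_one_sub (x : ℝ) : PhiAntideriv (1 - x) = -PhiAntideriv x := by
  have h₁ : 1 - x = -(x - 1) := by ring
  have h₂ : 1 - x - 1 = -x := by ring
  have h₃ : 1 - x - 1 / 2 = -(x - 1 / 2) := by ring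
  simp only [PhiAntideriv, h₂, h₃, Real.log_neg_eq_log]
  rw [h₁, Real.log_neg_eq_log]
  ring

theorem Phi_eq_of_ne {x : ℝ} (h₀ : x ≠ 0) (h₁ : x ≠ 1 / 2) (h₂ : x ≠ 1) :
    Phi x = (1 / Real.pi) * (Real.log x + Real.log (x - 1) - 2 * Real.log (x - 1 / 2)) := by
  have hx₁ : x - 1 ≠ 0 := sub_ne_zero.2 h₂
  have hx₂ : x - 1 / 2 ≠ 0 := sub_ne_zero.2 h₁
  have hsq : 4 * |x * (x - 1)| / (2 * x - 1) ^ 2 = |x| * |x - 1| / (x - 1 / 2) ^ 2 := by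
    rw [abs_mul]; field_simp; ring
  rw [Phi, hsq, Real.log_div (by positivity) (by positivity), Real.log_mul (by positivity)
    (by positivity), Real.log_abs, Real.log_abs, Real.log_pow]
  push_cast
  ring

theorem hasDerivAt_PhiAntideriv {x : ℝ} (h₀ : x ≠ 0) (h₁ : x ≠ 1 / 2) (h₂ : x ≠ 1) :
    HasDerivAt PhiAntideriv (Phi x) x := by
  have d₀ := Real.hasDerivAt_mul_log h₀
  have d₁ := (Real.hasDerivAt_mul_log (sub_ne_zero.2 h₂)).comp x ((hasDerivAt_id x).sub_const 1)
  have d₂ := (Real.hasDerivAt_mul_log (sub_ne_zero.2 h₁)).comp x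
    ((hasDerivAt_id x).sub_const (1 / 2))
  refine (((d₀.add d₁).sub (d₂.const_mul 2)).const_mul (1 / Real.pi)).congr_deriv ?_
  rw [Phi_eq_of_ne h₀ h₁ h₂]
  ring

theorem Phi_ae_eq :
    Phi =ᵐ[volume]
      fun x ↦ (1 / Real.pi) * (Real.log x + Real.log (x - 1) - 2 * Real.log (x - 1 / 2)) := by
  have hnull : volume ({0, 1 / 2, 1} : Set ℝ) = 0 := (toFinite _).measure_zero _
  filter_upwards [measure_eq_zero_iff_ae_notMem.1 hnull] with x hx
  simp only [mem_insert_iff, mem_singleton_iff, not_or] at hx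
  exact Phi_eq_of_ne hx.1 hx.2.1 hx.2.2

theorem intervalIntegrable_Phi (a b : ℝ) : IntervalIntegrable Phi volume a b := by
  have hlog (c : ℝ) : IntervalIntegrable (fun x ↦ Real.log (x - c)) volume a b := by
    simpa using intervalIntegral.intervalIntegrable_log'.comp_sub_right (a := a - c) (b := b - c) c
  exact (((intervalIntegral.intervalIntegrable_log'.add (hlog 1)).sub
    ((hlog (1 / 2)).const_mul 2)).const_mul (1 / Real.pi)).congr_ae
    (ae_restrict_of_ae Phi_ae_eq.symm)

theorem integral_Phi (a b : ℝ) : ∫ x in a..b, Phi x = PhiAntideriv b - PhiAntideriv a := by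
  refine integral_eq_of_hasDerivAt_off_countable _ _ (toFinite {0, 1 / 2, 1}).countable
    continuous_PhiAntideriv.continuousOn (fun x hx ↦ ?_) (intervalIntegrable_Phi a b)
  simp only [Set.mem_sdiff, mem_insert_iff, mem_singleton_iff, not_or] at hx
  exact hasDerivAt_PhiAntideriv hx.2.1 hx.2.2.1 hx.2.2.2

theorem intervalIntegrable_PhiI (a : ℝ) {ℓ : ℝ} (hℓ : ℓ ≠ 0) (p q : ℝ) :
    IntervalIntegrable (PhiI a ℓ) volume p q := by
  unfold PhiI
  have h := ((intervalIntegrable_Phi ((p - a) / ℓ) ((q - a) / ℓ)).comp_mul_right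
    (c := ℓ⁻¹)).comp_sub_right a
  simp only [div_inv_eq_mul, div_mul_cancel₀ _ hℓ, sub_add_cancel] at h
  simpa only [div_eq_mul_inv] using h

theorem integral_PhiI (a : ℝ) {ℓ : ℝ} (hℓ : ℓ ≠ 0) (p q : ℝ) :
    ∫ x in p..q, PhiI a ℓ x =
      ℓ * (PhiAntideriv ((q - a) / ℓ) - PhiAntideriv ((p - a) / ℓ)) := by
  simp only [PhiI, sub_div, intervalIntegral.integral_comp_div_sub Phi hℓ, integral_Phi,
    smul_eq_mul]

theorem mul_haarOn_eq_indicator_sub_indicator (f : ℝ → ℝ) (a b x : ℝ) :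
    f x * haarOn a b x =
      (Ico ((a + b) / 2) b).indicator f x - (Ico a ((a + b) / 2)).indicator f x := by
  by_cases h₁ : x ∈ Ico ((a + b) / 2) b
  · have h₂ : x ∉ Ico a ((a + b) / 2) := fun h ↦ h₁.1.not_gt h.2
    simp [haarOn, h₁, h₂]
  · by_cases h₂ : x ∈ Ico a ((a + b) / 2) <;> simp [haarOn, h₁, h₂]

theorem integrable_indicator_Ico {f : ℝ → ℝ} {p q : ℝ} (hpq : p ≤ q)
    (hf : IntervalIntegrable f volume p q) : Integrable ((Ico p q).indicator f) :=
  (integrable_indicator_iff measurableSet_Ico).2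
    ((intervalIntegrable_iff_integrableOn_Ico_of_le hpq).1 hf)

theorem integral_indicator_Ico (f : ℝ → ℝ) {p q : ℝ} (hpq : p ≤ q) :
    ∫ x, (Ico p q).indicator f x = ∫ x in p..q, f x := by
  rw [integral_indicator measurableSet_Ico, integral_Ico_eq_integral_Ioc,
    intervalIntegral.integral_of_le hpq]

theorem integral_mul_haarOn {f : ℝ → ℝ} {a b : ℝ} (hab : a ≤ b)
    (hf : IntervalIntegrable f volume a b) :
    ∫ x, f x * haarOn a b x =
      (∫ x in (a + b) / 2..b, f x) - ∫ x in a..(a + b) / 2, f x := by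
  have ha : a ≤ (a + b) / 2 := by linarith
  have hb : (a + b) / 2 ≤ b := by linarith
  have hm : (a + b) / 2 ∈ uIcc a b := by rw [uIcc_of_le hab]; exact ⟨ha, hb⟩
  simp only [mul_haarOn_eq_indicator_sub_indicator]
  rw [integral_sub (integrable_indicator_Ico hb (hf.mono_set (uIcc_subset_uIcc_right hm)))
    (integrable_indicator_Ico ha (hf.mono_set (uIcc_subset_uIcc_left hm))),
    integral_indicator_Ico f hb, integral_indicator_Ico f ha]

theorem integral_PhiI_mul_haarOn (a c : ℝ) {ℓ : ℝ} (hℓ : 0 < ℓ) :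
    ∫ x, PhiI a ℓ x * haarOn (c + ℓ / 2) (c + ℓ) x =
      ℓ * (PhiAntideriv ((c - a) / ℓ + 1) - 2 * PhiAntideriv ((c - a) / ℓ + 3 / 4)
        + PhiAntideriv ((c - a) / ℓ + 1 / 2)) := by
  rw [integral_mul_haarOn (by linarith) (intervalIntegrable_PhiI a hℓ.ne' _ _),
    integral_PhiI a hℓ.ne', integral_PhiI a hℓ.ne']
  have e₁ : (c + ℓ - a) / ℓ = (c - a) / ℓ + 1 := by field_simp; ring
  have e₂ : ((c + ℓ / 2 + (c + ℓ)) / 2 - a) / ℓ = (c - a) / ℓ + 3 / 4 := by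
    field_simp; ring
  have e₃ : (c + ℓ / 2 - a) / ℓ = (c - a) / ℓ + 1 / 2 := by field_simp; ring
  rw [e₁, e₂, e₃]
  ring

theorem Phi_add_lt_add {t : ℝ} (ht : 1 < t) :
    Phi t + Phi (t + 3 / 4) < Phi (t + 1 / 4) + Phi (t + 1 / 2) := by
  set g : ℝ → ℝ := fun x ↦ 4 * (x * (x - 1)) / (2 * x - 1) ^ 2
  have hg (x : ℝ) (hx : 1 < x) : 0 < g x := div_pos (by nlinarith) (by nlinarith)
  have hPhi (x : ℝ) (hx : 1 < x) : Phi x = 1 / Real.pi * Real.log (g x) := by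
    rw [Phi, abs_of_pos (by nlinarith)]
  have hprod : g t * g (t + 3 / 4) < g (t + 1 / 4) * g (t + 1 / 2) := by
    simp only [g]
    rw [div_mul_div_comm, div_mul_div_comm,
      div_lt_div_iff₀ (by apply mul_pos <;> nlinarith) (by apply mul_pos <;> nlinarith)]
    nlinarith [sq_nonneg ((t - 1) ^ 2), mul_nonneg (sub_nonneg.2 ht.le) (sq_nonneg (t - 1)),
      sq_nonneg (t - 1), sub_nonneg.2 ht.le]
  rw [hPhi t ht, hPhi _ (by linarith), hPhi _ (by linarith), hPhi _ (by linarith),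
    ← mul_add, ← mul_add, ← Real.log_mul (hg t ht).ne' (hg _ (by linarith)).ne',
    ← Real.log_mul (hg _ (by linarith)).ne' (hg _ (by linarith)).ne']
  exact mul_lt_mul_of_pos_left
    (Real.log_lt_log (mul_pos (hg t ht) (hg _ (by linarith))) hprod) (by positivity)

theorem PhiAntideriv_add_one_sub_lt {s : ℝ} (hs : 1 ≤ s) :
    PhiAntideriv (s + 1) - PhiAntideriv s <
      2 * (PhiAntideriv (s + 3 / 4) - PhiAntideriv (s + 1 / 4)) := by
  have hi (c : ℝ) : IntervalIntegrable (fun t ↦ Phi (t + c)) volume s (s + 1 / 4) := by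
    simpa using (intervalIntegrable_Phi (s + c) (s + 1 / 4 + c)).comp_add_right c
  have hI (c : ℝ) :
      ∫ t in s..s + 1 / 4, Phi (t + c) = PhiAntideriv (s + 1 / 4 + c) - PhiAntideriv (s + c) := by
    rw [intervalIntegral.integral_comp_add_right, integral_Phi]
  have hpos : 0 < ∫ t in s..s + 1 / 4, (Phi (t + 1 / 4) + Phi (t + 1 / 2)
      - (Phi t + Phi (t + 3 / 4))) :=
    intervalIntegral.intervalIntegral_pos_of_pos_on
      (((hi _).add (hi _)).sub ((intervalIntegrable_Phi _ _).add (hi _)))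
      (fun t ht ↦ sub_pos.2 (Phi_add_lt_add (hs.trans_lt ht.1))) (by linarith)
  rw [intervalIntegral.integral_sub ((hi _).add (hi _))
      ((intervalIntegrable_Phi _ _).add (hi _)),
    intervalIntegral.integral_add (hi _) (hi _),
    intervalIntegral.integral_add (intervalIntegrable_Phi _ _) (hi _),
    hI, hI, hI, integral_Phi] at hpos
  ring_nf at hpos ⊢
  linarith

theorem integral_PhiI_mul_haarOn_add_swap_neg {b c ℓ : ℝ} (hℓ : 0 < ℓ)
    (hbc : b + ℓ ≤ c) :
    (∫ x, PhiI b ℓ x * haarOn (c + ℓ / 2) (c + ℓ) x) +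
      (∫ x, PhiI c ℓ x * haarOn (b + ℓ / 2) (b + ℓ) x) < 0 := by
  have hs : 1 ≤ (c - b) / ℓ := (one_le_div hℓ).2 (by linarith)
  have hswap : (b - c) / ℓ = -((c - b) / ℓ) := by ring
  rw [integral_PhiI_mul_haarOn b c hℓ, integral_PhiI_mul_haarOn c b hℓ, hswap]
  generalize (c - b) / ℓ = s at hs ⊢
  rw [show -s + 1 = 1 - s by ring, show -s + 3 / 4 = 1 - (s + 1 / 4) by ring,
    show -s + 1 / 2 = 1 - (s + 1 / 2) by ring,
    PhiAntideriv_one_sub, PhiAntideriv_one_sub, PhiAntideriv_one_sub]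
  linear_combination mul_lt_mul_of_pos_left (PhiAntideriv_add_one_sub_lt hs) hℓ

theorem add_le_or_add_le_of_disjoint_Ico {a b ℓ : ℝ}
    (h : Disjoint (Ico a (a + ℓ)) (Ico b (b + ℓ))) : a + ℓ ≤ b ∨ b + ℓ ≤ a := by
  rw [Ico_disjoint_Ico, min_add_add_right] at h
  rcases le_total a b with hab | hab
  · exact Or.inl (by simpa [min_eq_left hab, max_eq_right hab] using h)
  · exact Or.inr (by simpa [min_eq_right hab, max_eq_left hab] using h)

theorem statement13 (aI aJ ℓ : ℝ) (hℓ : 0 < ℓ)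
    (hdisj : Disjoint (Set.Ico aI (aI + ℓ)) (Set.Ico aJ (aJ + ℓ))) :
    (∫ x, PhiI aI ℓ x * haarOn (aJ + ℓ / 2) (aJ + ℓ) x) +
      (∫ x, PhiI aJ ℓ x * haarOn (aI + ℓ / 2) (aI + ℓ) x) < 0 := by
  rcases add_le_or_add_le_of_disjoint_Ico hdisj with h | h
  · exact integral_PhiI_mul_haarOn_add_swap_neg hℓ h
  · rw [add_comm]
    exact integral_PhiI_mul_haarOn_add_swap_neg hℓ h
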